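/- Let w₁ ≥ ⋯ ≥ w_d = 0 be integers with d ≥ 2. Then either w₁ = ⋯ = w_d = 0, or ∏_{1 ≤ j < k ≤ d} (1 + (w_j − w_k)/(k − j)) ≥ d; moreover, equality ∏ = d holds if and only if (w₁,…,w_d) equals (1,1,…,1,0) or (1,0,…,0). -/
import Mathlib

set_option maxHeartbeats 1000000

open Finset

/-- The Weyl dimension `∏_{j<k} (1 + (w_j - w_k)/(k - j))` of the highest weight `w`. -/
def weylDim (d : ℕ) (w : Fin d → ℤ) : ℚ :=
  ∏ j : Fin d, ∏ k : Fin d,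
    if j < k then 1 + ((w j - w k : ℤ) : ℚ) / (((k.val : ℤ) - (j.val : ℤ) : ℤ) : ℚ)
    else 1

private def wfac (d : ℕ) (w : Fin d → ℤ) (j k : Fin d) : ℚ :=
  if j < k then 1 + ((w j - w k : ℤ) : ℚ) / (((k.val : ℤ) - (j.val : ℤ) : ℤ) : ℚ)
  else 1

private lemma weylDim_eq (d : ℕ) (w : Fin d → ℤ) :
    weylDim d w = ∏ p : Fin d × Fin d, wfac d w p.1 p.2 := by
  rw [← Finset.univ_product_univ, Finset.prod_product']
  rfl

private lemma denom_pos {d : ℕ} {j k : Fin d} (h : j < k) :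
    (0:ℚ) < (((k.val : ℤ) - (j.val : ℤ) : ℤ) : ℚ) := by
  have : (j:ℕ) < (k:ℕ) := h
  push_cast
  have : ((j:ℕ):ℚ) < ((k:ℕ):ℚ) := by exact_mod_cast this
  linarith

private lemma wfac_pos {d : ℕ} {w : Fin d → ℤ} (hw : ∀ j k : Fin d, j < k → 0 ≤ w j - w k)
    (j k : Fin d) : 0 < wfac d w j k := by
  unfold wfac
  split_ifs with h
  · have hc := denom_pos h
    have ha : (0:ℚ) ≤ ((w j - w k : ℤ) : ℚ) := by exact_mod_cast hw j k h
    have := div_nonneg ha hc.le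
    linarith
  · exact one_pos

private lemma wfac_le {d : ℕ} {u v : Fin d → ℤ}
    (huv : ∀ j k : Fin d, j < k → u j - u k ≤ v j - v k) (j k : Fin d) :
    wfac d u j k ≤ wfac d v j k := by
  unfold wfac
  split_ifs with h
  · have hc := denom_pos h
    have ha : ((u j - u k : ℤ) : ℚ) ≤ ((v j - v k : ℤ) : ℚ) := by exact_mod_cast huv j k h
    gcongr
  · exact le_refl 1

private lemma wfac_lt {d : ℕ} {u v : Fin d → ℤ} {j k : Fin d} (h : j < k)
    (hlt : u j - u k < v j - v k) : wfac d u j k < wfac d v j k := by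
  unfold wfac
  rw [if_pos h, if_pos h]
  have hc := denom_pos h
  have ha : ((u j - u k : ℤ) : ℚ) < ((v j - v k : ℤ) : ℚ) := by exact_mod_cast hlt
  gcongr

private lemma weylDim_le {d : ℕ} {u v : Fin d → ℤ}
    (hu : ∀ j k : Fin d, j < k → 0 ≤ u j - u k)
    (huv : ∀ j k : Fin d, j < k → u j - u k ≤ v j - v k) :
    weylDim d u ≤ weylDim d v := by
  rw [weylDim_eq, weylDim_eq]
  exact Finset.prod_le_prod (fun p _ => (wfac_pos hu p.1 p.2).le)
    (fun p _ => wfac_le huv p.1 p.2)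

private lemma weylDim_lt {d : ℕ} {u v : Fin d → ℤ}
    (hu : ∀ j k : Fin d, j < k → 0 ≤ u j - u k)
    (huv : ∀ j k : Fin d, j < k → u j - u k ≤ v j - v k)
    (hex : ∃ j k : Fin d, j < k ∧ u j - u k < v j - v k) :
    weylDim d u < weylDim d v := by
  rw [weylDim_eq, weylDim_eq]
  refine Finset.prod_lt_prod (fun p _ => wfac_pos hu p.1 p.2)
    (fun p _ => wfac_le huv p.1 p.2) ?_
  obtain ⟨j, k, hjk, hlt⟩ := hex
  exact ⟨(j, k), Finset.mem_univ _, wfac_lt hjk hlt⟩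

private def oneM (d m : ℕ) : Fin d → ℤ := fun j => if (j : ℕ) < m then 1 else 0

private def Hfun (m a b : ℕ) : ℚ :=
  if a < m ∧ m ≤ b then ((b:ℚ) + 1 - (a:ℚ)) / ((b:ℚ) - (a:ℚ)) else 1

private lemma telescope (j m : ℕ) (hj : j < m) (d : ℕ) (hd : m ≤ d) :
    ∏ k ∈ Ico m d, (((k:ℚ) + 1 - (j:ℚ)) / ((k:ℚ) - (j:ℚ)))
      = ((d:ℚ) - (j:ℚ)) / ((m:ℚ) - (j:ℚ)) := by
  have hm0 : ((m:ℚ) - (j:ℚ)) ≠ 0 := by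
    have : ((j:ℕ):ℚ) < ((m:ℕ):ℚ) := by exact_mod_cast hj
    intro h; linarith [sub_eq_zero.mp h]
  induction d, hd using Nat.le_induction with
  | base => rw [Finset.Ico_self, Finset.prod_empty, div_self hm0]
  | succ d hd ih =>
    rw [Finset.prod_Ico_succ_top hd, ih]
    have hd0 : ((d:ℚ) - (j:ℚ)) ≠ 0 := by
      have : ((j:ℕ):ℚ) < ((d:ℕ):ℚ) := by exact_mod_cast lt_of_lt_of_le hj hd
      intro h; linarith [sub_eq_zero.mp h]
    push_cast
    field_simp

private lemma outer (d m : ℕ) (hm : m ≤ d) :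
    ∏ j ∈ range m, (((d:ℚ) - (j:ℚ)) / ((m:ℚ) - (j:ℚ))) = (d.choose m : ℚ) := by
  rw [Finset.prod_div_distrib]
  have h1 : ∏ j ∈ range m, ((d:ℚ) - (j:ℚ)) = (d.descFactorial m : ℚ) := by
    rw [Nat.descFactorial_eq_prod_range, Nat.cast_prod]
    refine Finset.prod_congr rfl fun j hj => ?_
    have hjd : j ≤ d := le_trans (le_of_lt (mem_range.mp hj)) hm
    rw [Nat.cast_sub hjd]
  have h2 : ∏ j ∈ range m, ((m:ℚ) - (j:ℚ)) = (Nat.factorial m : ℚ) := by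
    rw [← Nat.descFactorial_self m, Nat.descFactorial_eq_prod_range, Nat.cast_prod]
    refine Finset.prod_congr rfl fun j hj => ?_
    rw [Nat.cast_sub (le_of_lt (mem_range.mp hj))]
  rw [h1, h2, Nat.choose_eq_descFactorial_div_factorial,
    Nat.cast_div (Nat.factorial_dvd_descFactorial d m)
      (by exact_mod_cast (Nat.factorial_ne_zero m))]

private lemma weylDim_oneM (d m : ℕ) (hm : m ≤ d) :
    weylDim d (oneM d m) = (d.choose m : ℚ) := by
  have key : ∀ j k : Fin d, wfac d (oneM d m) j k = Hfun m (j:ℕ) (k:ℕ) := by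
    intro j k
    by_cases hab : (j:ℕ) < m ∧ m ≤ (k:ℕ)
    · have hjk : j < k := by
        have : (j:ℕ) < (k:ℕ) := lt_of_lt_of_le hab.1 hab.2
        exact this
      rw [wfac, if_pos hjk, Hfun, if_pos hab]
      have h1 : oneM d m j = 1 := if_pos hab.1
      have h2 : oneM d m k = 0 := if_neg (not_lt.mpr hab.2)
      rw [h1, h2]
      have hc := denom_pos hjk
      have hc' : (((k:ℕ):ℚ) - ((j:ℕ):ℚ)) ≠ 0 := by
        push_cast at hc; linarith
      push_cast
      field_simp
      ring
    · rw [Hfun, if_neg hab, wfac]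
      split_ifs with h
      · have heq : oneM d m j = oneM d m k := by
          unfold oneM
          have hjk : (j:ℕ) < (k:ℕ) := h
          by_cases h1 : (j:ℕ) < m
          · have h2 : (k:ℕ) < m := by
              by_contra h2
              exact hab ⟨h1, not_lt.mp h2⟩
            rw [if_pos h1, if_pos h2]
          · have h2 : ¬ (k:ℕ) < m := by omega
            rw [if_neg h1, if_neg h2]
        rw [heq]
        simp
      · rfl
  have step1 : weylDim d (oneM d m)
      = ∏ j ∈ range d, ∏ k ∈ range d, Hfun m j k := by
    have : weylDim d (oneM d m) = ∏ j : Fin d, ∏ k : Fin d, wfac d (oneM d m) j k := rfl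
    rw [this]
    rw [show (∏ j : Fin d, ∏ k : Fin d, wfac d (oneM d m) j k)
        = ∏ j : Fin d, ∏ k : Fin d, Hfun m (j:ℕ) (k:ℕ) from
      Finset.prod_congr rfl fun j _ => Finset.prod_congr rfl fun k _ => key j k]
    rw [Fin.prod_univ_eq_prod_range (fun a => ∏ k : Fin d, Hfun m a (k:ℕ)) d]
    exact Finset.prod_congr rfl fun j _ =>
      Fin.prod_univ_eq_prod_range (fun b => Hfun m j b) d
  rw [step1]
  have step2 : ∀ j ∈ range d, (∏ k ∈ range d, Hfun m j k)
      = if j < m then ∏ k ∈ Ico m d, (((k:ℚ) + 1 - (j:ℚ)) / ((k:ℚ) - (j:ℚ))) else 1 := by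
    intro j _
    by_cases hj : j < m
    · rw [if_pos hj]
      have : ∀ k ∈ range d, Hfun m j k
          = if m ≤ k then (((k:ℚ) + 1 - (j:ℚ)) / ((k:ℚ) - (j:ℚ))) else 1 := by
        intro k _
        unfold Hfun
        by_cases hk : m ≤ k
        · rw [if_pos ⟨hj, hk⟩, if_pos hk]
        · rw [if_neg (fun hh => hk hh.2), if_neg hk]
      rw [Finset.prod_congr rfl this, ← Finset.prod_filter]
      congr 1
      ext x
      simp only [mem_filter, mem_range, mem_Ico]
      omega
    · rw [if_neg hj]
      refine Finset.prod_eq_one fun k _ => ?_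
      unfold Hfun
      rw [if_neg (fun hh => hj hh.1)]
  rw [Finset.prod_congr rfl step2, ← Finset.prod_filter]
  have hfil : filter (fun j => j < m) (range d) = range m := by
    ext x
    simp only [mem_filter, mem_range]
    omega
  rw [hfil]
  rw [Finset.prod_congr rfl (fun j hj => telescope j m (mem_range.mp hj) d hm)]
  exact outer d m hm

private lemma choose_ge : ∀ d m : ℕ, 1 ≤ m → m < d → d ≤ d.choose m := by
  intro d
  induction d with
  | zero => intro m h1 h2; omega
  | succ e ih =>
    intro m h1 h2
    by_cases hm1 : m = 1
    · subst hm1; rw [Nat.choose_one_right]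
    by_cases hme : m = e
    · subst hme; rw [Nat.choose_succ_self_right]
    have h2e : m < e := by omega
    obtain ⟨m', rfl⟩ : ∃ m', m = m' + 1 := ⟨m - 1, by omega⟩
    rw [Nat.choose_succ_succ, Nat.succ_eq_add_one]
    have ha : e ≤ e.choose m' := ih m' (by omega) (by omega)
    have hb : e ≤ e.choose (m' + 1) := ih (m' + 1) (by omega) h2e
    omega

private lemma choose_gt (d m : ℕ) (h1 : 2 ≤ m) (h2 : m + 1 < d) : d < d.choose m := by
  obtain ⟨e, rfl⟩ : ∃ e, d = e + 1 := ⟨d - 1, by omega⟩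
  obtain ⟨m', rfl⟩ : ∃ m', m = m' + 1 := ⟨m - 1, by omega⟩
  rw [Nat.choose_succ_succ, Nat.succ_eq_add_one]
  have ha : e ≤ e.choose m' := choose_ge e m' (by omega) (by omega)
  have hb : e ≤ e.choose (m' + 1) := choose_ge e (m' + 1) (by omega) (by omega)
  omega

/-- For integers `w₁ ≥ ⋯ ≥ w_d = 0` (`d = n + 2 ≥ 2`), either all `w_j = 0` or
the Weyl dimension is at least `d`; equality holds iff `w = (1,…,1,0)` or `w = (1,0,…,0)`. -/
theorem stmt17 (n : ℕ) (w : Fin (n + 2) → ℤ) (hmono : Antitone w)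
    (hlast : w (Fin.last (n + 1)) = 0) :
    ((∀ j, w j = 0) ∨ ((n : ℚ) + 2) ≤ weylDim (n + 2) w) ∧
    (weylDim (n + 2) w = ((n : ℚ) + 2) ↔
      ((∀ j, w j = if j = Fin.last (n + 1) then 0 else 1) ∨
       (∀ j, w j = if j = 0 then 1 else 0))) := by
  have hcast : ((n : ℚ) + 2) = (((n + 2 : ℕ)) : ℚ) := by push_cast; ring
  -- nonnegativity
  have h0 : ∀ j : Fin (n + 2), 0 ≤ w j := by
    intro j
    have := hmono (Fin.le_last j)
    omega
  have hwu : ∀ j k : Fin (n + 2), j < k → 0 ≤ w j - w k := by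
    intro j k hjk
    have := hmono hjk.le
    omega
  -- the support cardinality
  set S := Finset.univ.filter (fun j : Fin (n + 2) => w j ≠ 0) with hS
  set m := S.card with hmdef
  have hchar : ∀ j : Fin (n + 2), w j ≠ 0 ↔ (j : ℕ) < m := by
    intro j
    constructor
    · intro hj
      have hsub : Finset.Iic j ⊆ S := by
        intro i hi
        rw [Finset.mem_Iic] at hi
        rw [hS, Finset.mem_filter]
        refine ⟨Finset.mem_univ _, ?_⟩
        have h1 := hmono hi
        have h2 := h0 j
        omega
      have := Finset.card_le_card hsub
      rw [Fin.card_Iic] at this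
      omega
    · intro hj
      by_contra hw0
      have hsub : S ⊆ Finset.Iio j := by
        intro i hi
        rw [hS, Finset.mem_filter] at hi
        rw [Finset.mem_Iio]
        by_contra hij
        push_neg at hij
        have h1 := hmono hij
        have h2 := h0 i
        exact hi.2 (by omega)
      have := Finset.card_le_card hsub
      rw [Fin.card_Iio] at this
      omega
  have hmd : m < (n + 2) := by
    have hlastS : Fin.last (n+1) ∉ S := by
      rw [hS, Finset.mem_filter]
      push_neg
      intro _
      exact hlast
    have hsub : S ⊆ Finset.univ.erase (Fin.last (n+1)) := by
      intro i hi
      exact Finset.mem_erase.mpr ⟨fun h => hlastS (h ▸ hi), Finset.mem_univ _⟩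
    have := Finset.card_le_card hsub
    rw [Finset.card_erase_of_mem (Finset.mem_univ _), Finset.card_univ, Fintype.card_fin] at this
    omega
  -- comparison with oneM (n + 2) m
  have hou : ∀ j k : Fin (n + 2), j < k → 0 ≤ oneM (n + 2) m j - oneM (n + 2) m k := by
    intro j k hjk
    unfold oneM
    have : (j:ℕ) < (k:ℕ) := hjk
    split_ifs <;> omega
  have houv : ∀ j k : Fin (n + 2), j < k → oneM (n + 2) m j - oneM (n + 2) m k ≤ w j - w k := by
    intro j k hjk
    have hjk' : (j:ℕ) < (k:ℕ) := hjk
    unfold oneM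
    by_cases h1 : (j:ℕ) < m
    · have hwj : w j ≠ 0 := (hchar j).mpr h1
      have hwj1 : 1 ≤ w j := by have := h0 j; omega
      by_cases h2 : (k:ℕ) < m
      · rw [if_pos h1, if_pos h2]
        have := hmono hjk.le
        omega
      · rw [if_pos h1, if_neg h2]
        have hwk : w k = 0 := by
          by_contra hc
          exact h2 ((hchar k).mp hc)
        omega
    · have h2 : ¬ (k:ℕ) < m := by omega
      rw [if_neg h1, if_neg h2]
      have := hmono hjk.le
      omega
  have hle : weylDim (n + 2) (oneM (n + 2) m) ≤ weylDim (n + 2) w := weylDim_le hou houv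
  have hB : weylDim (n + 2) (oneM (n + 2) m) = ((n + 2).choose m : ℚ) := weylDim_oneM (n + 2) m hmd.le
  have holast : oneM (n + 2) m (Fin.last (n+1)) = 0 := by
    unfold oneM
    rw [if_neg]
    simp only [Fin.val_last]
    omega
  constructor
  · -- first conjunct
    by_cases hall : ∀ j, w j = 0
    · exact Or.inl hall
    · refine Or.inr ?_
      push_neg at hall
      obtain ⟨j0, hj0⟩ := hall
      have hm1 : 1 ≤ m := by
        have := (hchar j0).mp hj0
        omega
      have hC : (((n + 2 : ℕ)) : ℚ) ≤ ((n + 2).choose m : ℚ) := by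
        exact_mod_cast choose_ge (n + 2) m hm1 hmd
      rw [hcast]
      calc (((n + 2):ℕ):ℚ) ≤ ((n + 2).choose m : ℚ) := hC
        _ = weylDim (n + 2) (oneM (n + 2) m) := hB.symm
        _ ≤ weylDim (n + 2) w := hle
  · constructor
    · -- forward direction
      intro heq
      rw [hcast] at heq
      by_cases hall : ∀ j, w j = 0
      · exfalso
        have hw0 : w = oneM (n + 2) 0 := by
          funext j
          rw [hall j]
          unfold oneM
          rw [if_neg (by omega)]
        rw [hw0, weylDim_oneM (n + 2) 0 (by omega), Nat.choose_zero_right] at heq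
        have : (1:ℚ) < (((n + 2):ℕ):ℚ) := by
          have : 1 < (n + 2) := by omega
          exact_mod_cast this
        rw [← heq] at this
        norm_num at this
      push_neg at hall
      obtain ⟨j0, hj0⟩ := hall
      have hm1 : 1 ≤ m := by
        have := (hchar j0).mp hj0
        omega
      have hC : (((n + 2 : ℕ)) : ℚ) ≤ ((n + 2).choose m : ℚ) := by
        exact_mod_cast choose_ge (n + 2) m hm1 hmd
      -- equality forces w = oneM (n + 2) m
      have hweq : weylDim (n + 2) w = weylDim (n + 2) (oneM (n + 2) m) := by
        have h2 : weylDim (n + 2) w ≤ weylDim (n + 2) (oneM (n + 2) m) := by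
          rw [hB]; exact heq.le.trans hC
        exact le_antisymm h2 hle
      have hdiffeq : ∀ j k : Fin (n + 2), j < k → oneM (n + 2) m j - oneM (n + 2) m k = w j - w k := by
        intro j k hjk
        by_contra hc
        have hstrict : oneM (n + 2) m j - oneM (n + 2) m k < w j - w k :=
          lt_of_le_of_ne (houv j k hjk) hc
        have := weylDim_lt hou houv ⟨j, k, hjk, hstrict⟩
        rw [hweq] at this
        exact lt_irrefl _ this
      have hwone : ∀ j : Fin (n + 2), w j = oneM (n + 2) m j := by
        intro j
        by_cases hj : j = Fin.last (n+1)
        · rw [hj, hlast, holast]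
        · have hjlt : j < Fin.last (n+1) := Fin.lt_last_iff_ne_last.mpr hj
          have := hdiffeq j (Fin.last (n+1)) hjlt
          rw [hlast, holast] at this
          omega
      -- m = 1 or m = (n + 2) - 1
      have hmcase : m = 1 ∨ m + 1 = (n + 2) := by
        by_contra hc
        push_neg at hc
        have h2m : 2 ≤ m := by omega
        have h2d : m + 1 < (n + 2) := by omega
        have := choose_gt (n + 2) m h2m h2d
        have hgt : (((n + 2):ℕ):ℚ) < ((n + 2).choose m : ℚ) := by exact_mod_cast this
        rw [← hB, ← hweq, heq] at hgt
        exact lt_irrefl _ hgt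
      rcases hmcase with hm | hm
      · right
        intro j
        rw [hwone j]
        unfold oneM
        rw [hm]
        rcases eq_or_ne j 0 with rfl | hj
        · simp
        · rw [if_neg hj, if_neg (by
            intro h
            exact hj (Fin.ext (by simp only [Fin.val_zero]; omega)))]
      · left
        intro j
        rw [hwone j]
        unfold oneM
        by_cases hj : j = Fin.last (n+1)
        · rw [if_pos hj, if_neg (by rw [hj]; simp only [Fin.val_last]; omega)]
        · rw [if_neg hj, if_pos (by
            have : (j:ℕ) < n + 1 := by
              have hj2 := j.isLt
              have : (j:ℕ) ≠ n + 1 := fun h => hj (Fin.ext (by simp [Fin.val_last, h]))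
              omega
            omega)]
    · -- backward direction
      intro hpat
      rcases hpat with hpat | hpat
      · have hw : w = oneM (n + 2) (n+1) := by
          funext j
          rw [hpat j]
          unfold oneM
          by_cases hj : j = Fin.last (n+1)
          · rw [if_pos hj, if_neg (by rw [hj]; simp only [Fin.val_last]; omega)]
          · rw [if_neg hj, if_pos (by
              have hj2 := j.isLt
              have : (j:ℕ) ≠ n + 1 := fun h => hj (Fin.ext (by simp [Fin.val_last, h]))
              omega)]
        rw [hw, weylDim_oneM (n + 2) (n+1) (by omega), hcast]
        norm_cast
        exact Nat.choose_succ_self_right (n+1)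
      · have hw : w = oneM (n + 2) 1 := by
          funext j
          rw [hpat j]
          unfold oneM
          rcases eq_or_ne j 0 with rfl | hj
          · simp
          · rw [if_neg hj, if_neg (by
              intro h
              exact hj (Fin.ext (by simp only [Fin.val_zero]; omega)))]
        rw [hw, weylDim_oneM (n + 2) 1 (by omega), hcast, Nat.choose_one_right]
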